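/- For any 0 < a < b, there exists a constant m > 0 depending on a, b and ν such that for all s, t in [a,b]^ν, λ([0,s] △ [0,t]) ≥ m·‖s−t‖. -/

import Mathlib

/-!
For `t i ≤ s i`, the difference `[0,s] \ [0,t]` contains the slab of points whose `i`-th
coordinate lies in `(t i, s i]` and whose other coordinates lie in `[0, a]`, of volume
`a ^ (ν - 1) * (s i - t i)`. Hence `λ([0,s] △ [0,t]) ≥ a ^ (ν - 1) * |s i - t i|` for every `i`;
summing over `i` gives `ν λ([0,s] △ [0,t]) ≥ a ^ (ν - 1) ‖s - t‖₁ ≥ a ^ (ν - 1) ‖s - t‖₂`.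
The constant is `a ^ (ν - 1) / (ν + 1)` rather than `/ ν` only so that `ν = 0` needs no case.
-/

open MeasureTheory

noncomputable def box {ν : ℕ} (t : Fin ν → ℝ) : Set (Fin ν → ℝ) :=
  Set.univ.pi fun i => Set.Icc 0 (t i)

noncomputable def dlam {ν : ℕ} (s t : Fin ν → ℝ) : ℝ :=
  (volume (symmDiff (box s) (box t))).toReal

/-- Euclidean distance on `ℝ^ν`. -/
noncomputable def eudist {ν : ℕ} (s t : Fin ν → ℝ) : ℝ :=
  Real.sqrt (∑ i, (s i - t i) ^ 2)

open Set

section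

variable {ν : ℕ}

lemma volume_box_lt_top (t : Fin ν → ℝ) : volume (box t) < ⊤ := by
  rw [box, volume_pi_pi]
  exact ENNReal.prod_lt_top fun _ _ => measure_Icc_lt_top

lemma volume_symmDiff_box_ne_top (s t : Fin ν → ℝ) : volume (symmDiff (box s) (box t)) ≠ ⊤ :=
  ne_top_of_le_ne_top (measure_union_lt_top (volume_box_lt_top s) (volume_box_lt_top t)).ne
    (measure_mono symmDiff_le_sup)

lemma dlam_comm (s t : Fin ν → ℝ) : dlam s t = dlam t s := by
  rw [dlam, dlam, symmDiff_comm]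

lemma dlam_nonneg (s t : Fin ν → ℝ) : 0 ≤ dlam s t :=
  ENNReal.toReal_nonneg

lemma eudist_le_sum_abs (s t : Fin ν → ℝ) : eudist s t ≤ ∑ i, |s i - t i| := by
  rw [eudist, Real.sqrt_le_left (Finset.sum_nonneg fun _ _ => abs_nonneg _)]
  calc ∑ i, (s i - t i) ^ 2 = ∑ i, |s i - t i| ^ 2 := by simp only [sq_abs]
    _ ≤ (∑ i, |s i - t i|) ^ 2 := Finset.sum_sq_le_sq_sum_of_nonneg fun _ _ => abs_nonneg _

def slab (a : ℝ) (i : Fin ν) (l r : ℝ) : Set (Fin ν → ℝ) :=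
  univ.pi (Function.update (fun _ => Icc 0 a) i (Ioc l r))

lemma volume_slab (a : ℝ) (i : Fin ν) (l r : ℝ) :
    volume (slab a i l r) = ENNReal.ofReal (r - l) * ENNReal.ofReal a ^ (ν - 1) := by
  rw [slab, volume_pi_pi]
  simp [Function.apply_update (fun _ => (volume : Measure ℝ)), Finset.prod_update_of_mem,
    Real.volume_Ioc, Real.volume_Icc, ← Finset.erase_eq, Finset.card_erase_of_mem]

lemma slab_subset_box_diff_box {a : ℝ} (ha : 0 ≤ a) {s t : Fin ν → ℝ}
    (hs : ∀ j, a ≤ s j) (ht : ∀ j, a ≤ t j) (i : Fin ν) :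
    slab a i (t i) (s i) ⊆ box s \ box t := by
  intro x hx
  have hxi : x i ∈ Ioc (t i) (s i) := by simpa using hx i (mem_univ i)
  refine ⟨fun j _ => ?_, fun hxt => (hxt i (mem_univ i)).2.not_gt hxi.1⟩
  rcases eq_or_ne j i with rfl | hj
  · exact ⟨ha.trans ((ht j).trans hxi.1.le), hxi.2⟩
  · have hxj : x j ∈ Icc 0 a := by simpa [hj] using hx j (mem_univ j)
    exact ⟨hxj.1, hxj.2.trans (hs j)⟩

lemma pow_mul_sub_le_dlam {a : ℝ} (ha : 0 ≤ a) {s t : Fin ν → ℝ}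
    (hs : ∀ j, a ≤ s j) (ht : ∀ j, a ≤ t j) {i : Fin ν} (hi : t i ≤ s i) :
    a ^ (ν - 1) * (s i - t i) ≤ dlam s t := by
  have hvol : volume (slab a i (t i) (s i)) ≤ volume (symmDiff (box s) (box t)) :=
    measure_mono ((slab_subset_box_diff_box ha hs ht i).trans le_sup_left)
  have := ENNReal.toReal_mono (volume_symmDiff_box_ne_top s t) hvol
  rw [volume_slab, ENNReal.toReal_mul, ENNReal.toReal_pow, ENNReal.toReal_ofReal (by linarith),
    ENNReal.toReal_ofReal ha] at this
  rw [dlam]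
  linarith

lemma pow_mul_abs_sub_le_dlam {a : ℝ} (ha : 0 ≤ a) {s t : Fin ν → ℝ}
    (hs : ∀ j, a ≤ s j) (ht : ∀ j, a ≤ t j) (i : Fin ν) :
    a ^ (ν - 1) * |s i - t i| ≤ dlam s t := by
  rcases le_total (t i) (s i) with hi | hi
  · rw [abs_of_nonneg (sub_nonneg.mpr hi)]
    exact pow_mul_sub_le_dlam ha hs ht hi
  · rw [abs_sub_comm, abs_of_nonneg (sub_nonneg.mpr hi), dlam_comm]
    exact pow_mul_sub_le_dlam ha ht hs hi

end

theorem stmt1_general (ν : ℕ) (a b : ℝ) (ha : 0 < a) :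
    ∃ m > 0, ∀ s t : Fin ν → ℝ, (∀ i, s i ∈ Set.Icc a b) → (∀ i, t i ∈ Set.Icc a b) →
      m * eudist s t ≤ dlam s t := by
  refine ⟨a ^ (ν - 1) / (ν + 1), by positivity, fun s t hs ht => ?_⟩
  have hslab (i : Fin ν) : a ^ (ν - 1) * |s i - t i| ≤ dlam s t :=
    pow_mul_abs_sub_le_dlam ha.le (fun j => (hs j).1) (fun j => (ht j).1) i
  calc a ^ (ν - 1) / (ν + 1) * eudist s t
      ≤ a ^ (ν - 1) / (ν + 1) * ∑ i, |s i - t i| := by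
        gcongr
        exact eudist_le_sum_abs s t
    _ = (∑ i, a ^ (ν - 1) * |s i - t i|) / (ν + 1) := by
        rw [← Finset.mul_sum]
        ring
    _ ≤ ν * dlam s t / (ν + 1) := by
        gcongr
        simpa using Finset.sum_le_sum fun i (_ : i ∈ Finset.univ) => hslab i
    _ ≤ dlam s t := by
        rw [div_le_iff₀ (by positivity)]
        nlinarith [dlam_nonneg s t]

/-- For `0 < a < b`, there is `m > 0` with `m‖s−t‖ ≤ λ([0,s] △ [0,t])` on `[a,b]^ν`. -/
theorem stmt1 (ν : ℕ) (a b : ℝ) (ha : 0 < a) (hab : a < b) :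
    ∃ m > 0, ∀ s t : Fin ν → ℝ, (∀ i, s i ∈ Set.Icc a b) → (∀ i, t i ∈ Set.Icc a b) →
      m * eudist s t ≤ dlam s t :=
  stmt1_general ν a b ha
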